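/- Let D ⊂ ℝ² be a convex polygon with boundary vertices p₁, …, p_b fixed, and consider interior points x₁, …, x_m determined by the Tutte barycentric conditions: each x_j equals the average of its neighbors (which may be boundary vertices or other interior points), where the neighbor graph on interior points together with boundary vertices is connected and every interior point is connected through the graph to some boundary vertex. Then the linear system determining x₁, …, x_m has a unique solution, and every solution point x_j lies in the convex hull of {p₁, …, p_b}. -/

import Mathlib

/-!
Discrete maximum principle: if a solution of the averaging equations attains its maximum at an
interior vertex, every neighbour of that vertex takes the same value, so the maximum propagates
along a path to a boundary vertex. Composing a solution with linear functionals, this puts every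
solution in the convex hull of the boundary data (by Hahn–Banach separation) and shows that the
homogeneous system has only the zero solution; in finite dimension injectivity of the square
system gives existence.
-/

open Finset Set

variable {ι κ E : Type*} [AddCommGroup E] [Module ℝ E]

def ReachesBoundary (N : ι → Finset (ι ⊕ κ)) (j : ι) : Prop :=
  ∃ (l : ℕ) (c : ℕ → ι), c 0 = j ∧
    (∀ i < l, Sum.inl (c (i + 1)) ∈ N (c i)) ∧ ∃ q : κ, Sum.inr q ∈ N (c l)

theorem ReachesBoundary.exists_inr_mem_of_closed {N : ι → Finset (ι ⊕ κ)} {j : ι}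
    (h : ReachesBoundary N j) {S : ι → Prop} (hS : ∀ i i', S i → Sum.inl i' ∈ N i → S i')
    (hj : S j) : ∃ i q, S i ∧ Sum.inr q ∈ N i := by
  obtain ⟨l, c, rfl, hc, q, hq⟩ := h
  have hchain : ∀ i ≤ l, S (c i) := by
    intro i hi
    induction i with
    | zero => exact hj
    | succ i ih => exact hS _ _ (ih (by omega)) (hc i (by omega))
  exact ⟨c l, q, hchain l le_rfl, hq⟩

theorem Finset.eq_of_inv_card_mul_sum_eq_of_le {α : Type*} {s : Finset α} {y : α → ℝ} {M : ℝ}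
    (hle : ∀ k ∈ s, y k ≤ M) (havg : (s.card : ℝ)⁻¹ * ∑ k ∈ s, y k = M) {k : α}
    (hk : k ∈ s) : y k = M := by
  have hcard : (s.card : ℝ) ≠ 0 := by exact_mod_cast (card_pos.mpr ⟨k, hk⟩).ne'
  have hsum : ∑ k ∈ s, y k = ∑ _k ∈ s, M := by
    rw [sum_const, nsmul_eq_mul, ← havg, mul_inv_cancel_left₀ hcard]
  exact (sum_eq_sum_iff_of_le hle).1 hsum k hk

variable (E) in
noncomputable def neighborAverage (N : ι → Finset (ι ⊕ κ)) : (ι ⊕ κ → E) →ₗ[ℝ] ι → E :=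
  LinearMap.pi fun j => ((N j).card : ℝ)⁻¹ • ∑ k ∈ N j, LinearMap.proj k

@[simp]
theorem neighborAverage_apply (N : ι → Finset (ι ⊕ κ)) (y : ι ⊕ κ → E) (j : ι) :
    neighborAverage E N y j = ((N j).card : ℝ)⁻¹ • ∑ k ∈ N j, y k := by
  simp [neighborAverage]

theorem comp_neighborAverage {F : Type*} [AddCommGroup F] [Module ℝ F] (f : E →ₗ[ℝ] F)
    (N : ι → Finset (ι ⊕ κ)) (y : ι ⊕ κ → E) :
    f ∘ neighborAverage E N y = neighborAverage F N (f ∘ y) := by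
  ext j
  simp [map_sum]

theorem le_of_eq_neighborAverage [Finite ι] {N : ι → Finset (ι ⊕ κ)}
    (hN : ∀ j, ReachesBoundary N j) {g : ι → ℝ} {q : κ → ℝ}
    (hg : g = neighborAverage ℝ N (Sum.elim g q)) {P : ℝ} (hq : ∀ r, q r ≤ P) (j : ι) :
    g j ≤ P := by
  by_contra! hj
  have : Nonempty ι := ⟨j⟩
  obtain ⟨jM, hjM⟩ := Finite.exists_max g
  have hPM : P < g jM := hj.trans_le (hjM j)
  -- the set where the maximum is attained is closed under passing to interior neighbours
  have hmax : ∀ i, g i = g jM → ∀ k ∈ N i, Sum.elim g q k = g jM := by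
    intro i hi k hk
    refine eq_of_inv_card_mul_sum_eq_of_le ?_ ?_ hk
    · rintro (i' | r) -
      exacts [hjM i', (hq r).trans hPM.le]
    · rw [← hi, hg, neighborAverage_apply, smul_eq_mul, ← hg]
  obtain ⟨i, r, hi, hr⟩ := (hN jM).exists_inr_mem_of_closed (S := fun i => g i = g jM)
    (fun i i' hi hi' => hmax i hi _ hi') rfl
  have := hmax i hi _ hr
  simp only [Sum.elim_inr] at this
  linarith [hq r]

theorem eq_zero_of_eq_neighborAverage [Finite ι]
    {N : ι → Finset (ι ⊕ κ)} (hN : ∀ j, ReachesBoundary N j) {d : ι → E}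
    (hd : d = neighborAverage E N (Sum.elim d 0)) : d = 0 := by
  have hφ : ∀ φ : Module.Dual ℝ E, φ ∘ d = neighborAverage ℝ N (Sum.elim (φ ∘ d) 0) := by
    intro φ
    conv_lhs => rw [hd, comp_neighborAverage, Sum.comp_elim]
    rw [Pi.comp_zero, map_zero, Function.const_zero]
  ext1 j
  refine (Module.forall_dual_apply_eq_zero_iff ℝ (d j)).1 fun φ => le_antisymm ?_ ?_
  · exact le_of_eq_neighborAverage hN (hφ φ) (P := 0) (fun _ => le_rfl) j
  · exact neg_nonpos.1 (le_of_eq_neighborAverage hN (hφ (-φ)) (P := 0) (fun _ => le_rfl) j)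

theorem existsUnique_eq_neighborAverage [FiniteDimensional ℝ E] [Finite ι] {N : ι → Finset (ι ⊕ κ)}
    (hN : ∀ j, ReachesBoundary N j) (p : κ → E) :
    ∃! x : ι → E, x = neighborAverage E N (Sum.elim x p) := by
  let extendByZero : (ι → E) →ₗ[ℝ] ι ⊕ κ → E :=
    (LinearEquiv.sumArrowLequivProdArrow ι κ ℝ E).symm.toLinearMap ∘ₗ LinearMap.inl ℝ _ _
  let L := LinearMap.id - neighborAverage E N ∘ₗ extendByZero
  have hL : ∀ x, L x = x - neighborAverage E N (Sum.elim x 0) := fun x => rfl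
  have hsol : ∀ x, x = neighborAverage E N (Sum.elim x p) ↔
      L x = neighborAverage E N (Sum.elim 0 p) := by
    intro x
    rw [hL, sub_eq_iff_eq_add', ← map_add, ← Sum.elim_add_add, add_zero, zero_add]
  have hinj : Function.Injective L := by
    rw [← LinearMap.ker_eq_bot, LinearMap.ker_eq_bot']
    intro d hd
    exact eq_zero_of_eq_neighborAverage hN (sub_eq_zero.1 ((hL d).symm.trans hd))
  obtain ⟨x, hx⟩ := LinearMap.injective_iff_surjective.1 hinj (neighborAverage E N (Sum.elim 0 p))
  exact ⟨x, (hsol x).2 hx, fun y hy => hinj (((hsol y).1 hy).trans hx.symm)⟩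

theorem mem_convexHull_of_eq_neighborAverage [TopologicalSpace E] [IsTopologicalAddGroup E] [ContinuousSMul ℝ E] [LocallyConvexSpace ℝ E]
    [T2Space E] [Finite ι] [Finite κ] {N : ι → Finset (ι ⊕ κ)}
    (hN : ∀ j, ReachesBoundary N j) {x : ι → E} {p : κ → E}
    (hx : x = neighborAverage E N (Sum.elim x p)) (j : ι) :
    x j ∈ convexHull ℝ (range p) := by
  by_contra hj
  obtain ⟨f, u, hfp, hfx⟩ := geometric_hahn_banach_closed_point (convex_convexHull ℝ _)
    ((finite_range p).isClosed_convexHull ℝ) hj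
  have hfx' : f ∘ x = neighborAverage ℝ N (Sum.elim (f ∘ x) (f ∘ p)) := by
    conv_lhs => rw [hx]
    rw [← ContinuousLinearMap.coe_coe, comp_neighborAverage, Sum.comp_elim]
  have := le_of_eq_neighborAverage hN hfx'
    (fun r => (hfp _ (subset_convexHull ℝ _ (mem_range_self r))).le) j
  exact (this.trans_lt hfx).false

theorem tutte_system_unique_and_convex_general
    {b m : ℕ} (p : Fin b → EuclideanSpace ℝ (Fin 2))
    (Nb : Fin m → Finset (Fin m ⊕ Fin b))
    (hconn : ∀ j : Fin m, ∃ (l : ℕ) (c : ℕ → Fin m), c 0 = j ∧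
      (∀ i < l, Sum.inl (c (i + 1)) ∈ Nb (c i)) ∧ ∃ q : Fin b, Sum.inr q ∈ Nb (c l))
    (Sat : (Fin m → EuclideanSpace ℝ (Fin 2)) → Prop)
    (hSat : ∀ x, Sat x ↔ ∀ j : Fin m,
      x j = ((Nb j).card : ℝ)⁻¹ • ∑ k ∈ Nb j, Sum.elim x p k) :
    (∃! x : Fin m → EuclideanSpace ℝ (Fin 2), Sat x) ∧
    ∀ x : Fin m → EuclideanSpace ℝ (Fin 2), Sat x →
      ∀ j : Fin m, x j ∈ convexHull ℝ (Set.range p) := by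
  have hSat' : ∀ x, Sat x ↔ x = neighborAverage _ Nb (Sum.elim x p) := fun x => by
    simp only [hSat, funext_iff, neighborAverage_apply]
  simp only [hSat']
  exact ⟨existsUnique_eq_neighborAverage hconn p,
    fun x hx => mem_convexHull_of_eq_neighborAverage hconn hx⟩

/-- (Tutte embedding linear system.) Fix boundary positions `p 1, …, p b` of a
convex polygon in the plane and, for each interior index `j`, a nonempty set `Nb j` of neighbors
(interior or boundary indices), such that every interior vertex is connected through the
neighbor graph to some boundary vertex.  Then the barycentric (Tutte) system
`x j = (1/|Nb j|)·Σ_{k ∈ Nb j} y k` (with `y k = x k` for interior and `y k = p k` for boundary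
neighbors) has a unique solution, and every solution point lies in the convex hull of the
boundary positions. -/
theorem tutte_system_unique_and_convex
    {b m : ℕ} (p : Fin b → EuclideanSpace ℝ (Fin 2))
    (Nb : Fin m → Finset (Fin m ⊕ Fin b))
    (hne : ∀ j, (Nb j).Nonempty)
    (hconn : ∀ j : Fin m, ∃ (l : ℕ) (c : ℕ → Fin m), c 0 = j ∧
      (∀ i < l, Sum.inl (c (i + 1)) ∈ Nb (c i)) ∧ ∃ q : Fin b, Sum.inr q ∈ Nb (c l))
    (Sat : (Fin m → EuclideanSpace ℝ (Fin 2)) → Prop)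
    (hSat : ∀ x, Sat x ↔ ∀ j : Fin m,
      x j = ((Nb j).card : ℝ)⁻¹ • ∑ k ∈ Nb j, Sum.elim x p k) :
    (∃! x : Fin m → EuclideanSpace ℝ (Fin 2), Sat x) ∧
    ∀ x : Fin m → EuclideanSpace ℝ (Fin 2), Sat x →
      ∀ j : Fin m, x j ∈ convexHull ℝ (Set.range p) :=
  tutte_system_unique_and_convex_general p Nb hconn Sat hSat
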